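/- Let μ_A, μ_B be martingale mass functions on binary strings with μ_A(Λ) + μ_B(Λ) = 1 (Λ the empty string). For a pair of betting strategies (S_A, μ_A), (S_B, μ_B), define the capital of a coordinate x as μ(x)/λ(S(x)). Then the set D of sequences on which both strategies achieve capital at most 2 (i.e. every part containing the sequence has capital ≤ 2 in both strategies) has uniform measure at least 1/2. -/
import Mathlib


/-- A time-indexed partition refinement of Cantor space `ℕ → Bool` all of whose
parts are clopen, with finitely many coordinates defined at each time. -/
structure CantorPR where
  S : ℕ → List Bool → Option (Set (ℕ → Bool))
  root : S 0 [] = some Set.univ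
  stable : ∀ t t' x v, t ≤ t' → S t x = some v → S t' x = some v
  nonempty : ∀ t x v, S t x = some v → v.Nonempty
  clopen : ∀ t x v, S t x = some v → IsClopen v
  finite : ∀ t, {x : List Bool | (S t x).isSome}.Finite
  children : ∀ t x, (S t (x ++ [false])).isSome →
      (S t (x ++ [true])).isSome ∧ (S (t - 1) x).isSome
  children' : ∀ t x, (S t (x ++ [true])).isSome →
      (S t (x ++ [false])).isSome ∧ (S (t - 1) x).isSome
  split : ∀ t x v v₀ v₁, S t x = some v → S t (x ++ [false]) = some v₀ →
    S t (x ++ [true]) = some v₁ → Disjoint v₀ v₁ ∧ v₀ ∪ v₁ = v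

/-- A coordinate is terminal at time `t` if its part is defined but neither child is. -/
def CantorPR.Terminal (P : CantorPR) (t : ℕ) (x : List Bool) : Prop :=
  (P.S t x).isSome ∧ P.S t (x ++ [false]) = none ∧ P.S t (x ++ [true]) = none

/-- The restriction with finite domain `K` given by the values of `r` on `K` is
elementary at `t`: the set of sequences agreeing with `r` on `K` is contained in a
single terminal part. -/
def CantorPR.Elementary (P : CantorPR) (t : ℕ) (K : Finset ℕ) (r : ℕ → Bool) : Prop :=
  ∃ x v, P.S t x = some v ∧ P.Terminal t x ∧
    {σ : ℕ → Bool | ∀ p ∈ K, σ p = r p} ⊆ v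

open MeasureTheory
open scoped ENNReal NNReal

/-- The set of infinite binary sequences consistent with the restriction `r`. -/
def consistentSet (r : ℕ → Option Bool) : Set (ℕ → Bool) :=
  {σ | ∀ p b, r p = some b → σ p = b}

/-- `μ` is the uniform (fair-coin) measure on Cantor space: every finite restriction
has measure `2 ^ (-|dom|)`. -/
def IsUniformMeasure (μ : Measure (ℕ → Bool)) : Prop :=
  ∀ r : ℕ → Option Bool, {p | (r p).isSome}.Finite →
    μ (consistentSet r) = (1 / 2 : ℝ≥0∞) ^ ({p | (r p).isSome}.ncard)

/-- A mass function: `μ(x) = μ(x0) + μ(x1)`. -/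
def IsMassFunction (m : List Bool → ℝ≥0) : Prop :=
  ∀ x, m x = m (x ++ [false]) + m (x ++ [true])

/-- Prefix dichotomy for a concatenation with a single element. -/
lemma prefix_concat_cases'' {x ys : List Bool} {b : Bool} (h : x <+: ys ++ [b]) :
    x <+: ys ∨ x = ys ++ [b] := by
  rcases le_or_gt x.length ys.length with hl | hl
  · left
    have hx : x = (ys ++ [b]).take x.length := List.prefix_iff_eq_take.mp h
    rw [List.take_append_of_le_length hl] at hx
    rw [hx]; exact List.take_prefix _ _
  · right
    have h2 : x.length ≤ ys.length + 1 := by simpa using h.length_le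
    exact h.eq_of_length (by simp; omega)

/-- Sum of a mass function over a prefix-antichain of strings of length at most `N`
is at most the mass of the root. -/
lemma antichain_sum' (M : List Bool → ℝ≥0∞)
    (hM : ∀ x, M x = M (x ++ [false]) + M (x ++ [true])) :
    ∀ (N : ℕ) (F : Finset (List Bool)),
      (∀ x ∈ F, ∀ y ∈ F, x <+: y → x = y) →
      (∀ x ∈ F, x.length ≤ N) → ∑ x ∈ F, M x ≤ M [] := by
  intro N
  induction N with
  | zero =>
    intro F hac hlen
    have hsub : F ⊆ {[]} := by
      intro x hx
      simp [List.length_eq_zero_iff.mp (Nat.le_zero.mp (hlen x hx))]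
    calc ∑ x ∈ F, M x ≤ ∑ x ∈ ({[]} : Finset (List Bool)), M x :=
          Finset.sum_le_sum_of_subset hsub
      _ = M [] := by simp
  | succ N ih =>
    classical
    intro F hac hlen
    set G : Finset (List Bool) := F.filter (fun x => x.length ≤ N) with hGdef
    set H : Finset (List Bool) := F.filter (fun x => ¬ x.length ≤ N) with hHdef
    have hHlen : ∀ x ∈ H, x.length = N + 1 := by
      intro x hx
      rw [hHdef, Finset.mem_filter] at hx
      have h1 := hlen x hx.1
      have h2 := hx.2
      omega
    set P : Finset (List Bool) := H.image List.dropLast with hPdef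
    have hPlen : ∀ p ∈ P, p.length = N := by
      intro p hp
      rw [hPdef, Finset.mem_image] at hp
      obtain ⟨x, hx, rfl⟩ := hp
      simp [List.length_dropLast, hHlen x hx]
    have hPpre : ∀ p ∈ P, ∃ x ∈ F, p <+: x ∧ p ≠ x := by
      intro p hp
      rw [hPdef, Finset.mem_image] at hp
      obtain ⟨x, hx, rfl⟩ := hp
      refine ⟨x, Finset.filter_subset _ _ hx, List.dropLast_prefix x, ?_⟩
      intro hcontra
      have h1 := congrArg List.length hcontra
      have h2 := hHlen x hx
      rw [List.length_dropLast] at h1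
      omega
    have hHP : ∑ x ∈ H, M x ≤ ∑ p ∈ P, M p := by
      have hmaps : ∀ x ∈ H, x.dropLast ∈ P := fun x hx => Finset.mem_image_of_mem _ hx
      rw [← Finset.sum_fiberwise_of_maps_to hmaps M]
      refine Finset.sum_le_sum ?_
      intro p hp
      have hfib : H.filter (fun x => x.dropLast = p) ⊆ {p ++ [false], p ++ [true]} := by
        intro x hx
        rw [Finset.mem_filter] at hx
        have hne : x ≠ [] := by
          intro hnil
          have := hHlen x hx.1; rw [hnil] at this; simp at this
        have hx' : x.dropLast ++ [x.getLast hne] = x := List.dropLast_append_getLast hne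
        rw [hx.2] at hx'
        rcases Bool.eq_false_or_eq_true (x.getLast hne) with hb | hb <;>
          rw [hb] at hx' <;> simp [← hx']
      calc ∑ x ∈ H.filter (fun x => x.dropLast = p), M x
          ≤ ∑ x ∈ ({p ++ [false], p ++ [true]} : Finset (List Bool)), M x :=
            Finset.sum_le_sum_of_subset hfib
        _ = M (p ++ [false]) + M (p ++ [true]) := Finset.sum_pair (by simp)
        _ = M p := (hM p).symm
    have hdisj : Disjoint G P := by
      rw [Finset.disjoint_left]
      intro p hpG hpP
      obtain ⟨x, hxF, hpre, hne⟩ := hPpre p hpP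
      exact hne (hac p (Finset.filter_subset _ _ hpG) x hxF hpre)
    have hac' : ∀ x ∈ G ∪ P, ∀ y ∈ G ∪ P, x <+: y → x = y := by
      intro x hx y hy hpre
      rcases Finset.mem_union.mp hy with h | h
      · rcases Finset.mem_union.mp hx with h' | h'
        · exact hac x (Finset.filter_subset _ _ h') y (Finset.filter_subset _ _ h) hpre
        · have h1 := hPlen x h'
          have h2 : y.length ≤ N := (Finset.mem_filter.mp h).2
          exact hpre.eq_of_length (by have := hpre.length_le; omega)
      · obtain ⟨z, hzF, hzpre, hzne⟩ := hPpre y h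
        have hxz : x <+: z := hpre.trans hzpre
        rcases Finset.mem_union.mp hx with h' | h'
        · have hxez := hac x (Finset.filter_subset _ _ h') z hzF hxz
          subst hxez
          exact hpre.eq_of_length (le_antisymm hpre.length_le hzpre.length_le)
        · exact hpre.eq_of_length (by rw [hPlen x h', hPlen y h])
    have hlen' : ∀ x ∈ G ∪ P, x.length ≤ N := by
      intro x hx
      rcases Finset.mem_union.mp hx with h | h
      · exact (Finset.mem_filter.mp h).2
      · exact (hPlen x h).le
    calc ∑ x ∈ F, M x = ∑ x ∈ G, M x + ∑ x ∈ H, M x :=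
          (Finset.sum_filter_add_sum_filter_not F _ M).symm
      _ ≤ ∑ x ∈ G, M x + ∑ p ∈ P, M p := add_le_add le_rfl hHP
      _ = ∑ x ∈ G ∪ P, M x := (Finset.sum_union hdisj).symm
      _ ≤ M [] := ih (G ∪ P) hac' hlen'

/-- The value of a part of a `CantorPR` is independent of the time at which it is defined. -/
lemma CantorPR.part_unique (P : CantorPR) {t t' : ℕ} {x : List Bool} {v v' : Set (ℕ → Bool)}
    (h : P.S t x = some v) (h' : P.S t' x = some v') : v = v' := by
  rcases le_total t t' with ht | ht
  · have := P.stable t t' x v ht h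
    rw [this] at h'; exact Option.some.inj h'
  · have := P.stable t' t x v' ht h'
    rw [this] at h; exact (Option.some.inj h).symm

/-- Parts are nested along prefixes. -/
lemma CantorPR.nested (P : CantorPR) (y : List Bool) :
    ∀ x, x <+: y → ∀ {t v t' w}, P.S t y = some v → P.S t' x = some w → v ⊆ w := by
  induction y using List.reverseRecOn with
  | nil =>
    intro x hx t v t' w hy hx'
    rw [List.prefix_nil.mp hx] at hx'
    rw [P.part_unique hy hx']
  | append_singleton ys b ihy =>
    intro x hx t v t' w hy hx'
    rcases prefix_concat_cases'' hx with hpre | rfl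
    · have hkids : (P.S t (ys ++ [false])).isSome ∧ (P.S t (ys ++ [true])).isSome ∧
          (P.S (t-1) ys).isSome := by
        cases b with
        | false =>
          have h1 : (P.S t (ys ++ [false])).isSome := by rw [hy]; rfl
          obtain ⟨h2, h3⟩ := P.children t ys h1
          exact ⟨h1, h2, h3⟩
        | true =>
          have h1 : (P.S t (ys ++ [true])).isSome := by rw [hy]; rfl
          obtain ⟨h2, h3⟩ := P.children' t ys h1
          exact ⟨h2, h1, h3⟩
      obtain ⟨u, hu⟩ := Option.isSome_iff_exists.mp hkids.2.2
      have hut : P.S t ys = some u := P.stable (t-1) t ys u (Nat.sub_le t 1) hu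
      obtain ⟨v₀, hv₀⟩ := Option.isSome_iff_exists.mp hkids.1
      obtain ⟨v₁, hv₁⟩ := Option.isSome_iff_exists.mp hkids.2.1
      obtain ⟨-, hsplit⟩ := P.split t ys u v₀ v₁ hut hv₀ hv₁
      have hvu : v ⊆ u := by
        cases b with
        | false =>
          rw [hv₀] at hy
          rw [← Option.some.inj hy, ← hsplit]; exact Set.subset_union_left
        | true =>
          rw [hv₁] at hy
          rw [← Option.some.inj hy, ← hsplit]; exact Set.subset_union_right
      exact hvu.trans (ihy x hpre hut hx')
    · rw [P.part_unique hy hx']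

/-- The set of sequences on which a single betting strategy at some point achieves
capital exceeding `2` has measure at most half the initial mass. -/
lemma strategy_bound (lam : Measure (ℕ → Bool)) (P : CantorPR) (m : List Bool → ℝ≥0)
    (hm : IsMassFunction m) :
    lam {σ : ℕ → Bool | ∃ t x v, P.S t x = some v ∧ σ ∈ v ∧ 2 * lam v < (m x : ℝ≥0∞)} ≤
      (m [] : ℝ≥0∞) / 2 := by
  classical
  set Bad : List Bool → Prop :=
    fun x => ∃ t v, P.S t x = some v ∧ 2 * lam v < (m x : ℝ≥0∞) with hBad
  set MinBad : List Bool → Prop :=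
    fun x => Bad x ∧ ∀ y, y <+: x → y ≠ x → ¬ Bad y with hMinBad
  have hminex : ∀ n (x : List Bool), x.length ≤ n → Bad x → ∃ y, y <+: x ∧ MinBad y := by
    intro n
    induction n with
    | zero =>
      intro x hx hbad
      rw [List.length_eq_zero_iff.mp (Nat.le_zero.mp hx)] at hbad ⊢
      exact ⟨[], List.prefix_refl _, hbad, fun y hy hne _ => hne (List.prefix_nil.mp hy)⟩
    | succ n ihn =>
      intro x hx hbad
      by_cases hmb : MinBad x
      · exact ⟨x, List.prefix_refl _, hmb⟩
      · have hmb2 : ¬ (Bad x ∧ ∀ y, y <+: x → y ≠ x → ¬ Bad y) := hmb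
        push_neg at hmb2
        obtain ⟨y, hy, hyne, hybad⟩ := hmb2 hbad
        have hylen : y.length ≤ n := by
          have h1 := hy.length_le
          have h2 : y.length ≠ x.length := fun hc => hyne (hy.eq_of_length hc)
          omega
        obtain ⟨z, hz, hzmb⟩ := ihn y hylen hybad
        exact ⟨z, hz.trans hy, hzmb⟩
  set W : List Bool → Set (ℕ → Bool) := fun x =>
    if MinBad x then ⋃ t, ((P.S t x).getD ∅ : Set (ℕ → Bool)) else ∅ with hW
  have hcover : {σ : ℕ → Bool | ∃ t x v, P.S t x = some v ∧ σ ∈ v ∧ 2 * lam v < (m x : ℝ≥0∞)}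
      ⊆ ⋃ x, W x := by
    intro σ hσ
    obtain ⟨t, x, v, hS, hσv, hlt⟩ := hσ
    obtain ⟨y, hy, hymb⟩ := hminex x.length x le_rfl ⟨t, v, hS, hlt⟩
    obtain ⟨t', w, hw, hlt'⟩ := hymb.1
    refine Set.mem_iUnion.mpr ⟨y, ?_⟩
    rw [hW]
    simp only [if_pos hymb]
    refine Set.mem_iUnion.mpr ⟨t', ?_⟩
    rw [hw]
    exact P.nested x y hy hS hw hσv
  have hWle : ∀ x, lam (W x) ≤ if MinBad x then (m x : ℝ≥0∞) / 2 else 0 := by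
    intro x
    rw [hW]
    by_cases hmb : MinBad x
    · simp only [if_pos hmb]
      obtain ⟨t, v, hS, hlt⟩ := hmb.1
      have hWeq : (⋃ t', ((P.S t' x).getD ∅ : Set (ℕ → Bool))) = v := by
        apply Set.Subset.antisymm
        · refine Set.iUnion_subset fun t' => ?_
          cases hS' : P.S t' x with
          | none => simp
          | some v' =>
            simp only [Option.getD_some]
            rw [P.part_unique hS' hS]
        · intro σ hσ
          exact Set.mem_iUnion.mpr ⟨t, by rw [hS]; exact hσ⟩
      rw [hWeq]
      rw [ENNReal.le_div_iff_mul_le (Or.inl two_ne_zero) (Or.inl ENNReal.ofNat_ne_top), mul_comm]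
      exact hlt.le
    · simp only [if_neg hmb]
      simp
  have hantichain : ∀ F : Finset (List Bool),
      ∑ x ∈ F, (if MinBad x then (m x : ℝ≥0∞) / 2 else 0) ≤ (m [] : ℝ≥0∞) / 2 := by
    intro F
    rw [← Finset.sum_filter]
    have hac : ∀ x ∈ F.filter MinBad, ∀ y ∈ F.filter MinBad, x <+: y → x = y := by
      intro x hx y hy hpre
      by_contra hne
      exact ((Finset.mem_filter.mp hy).2).2 x hpre hne ((Finset.mem_filter.mp hx).2).1
    have hlen : ∀ x ∈ F.filter MinBad, x.length ≤ F.sup List.length := by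
      intro x hx
      exact Finset.le_sup (Finset.filter_subset _ _ hx)
    have := antichain_sum' (fun x => (m x : ℝ≥0∞))
      (fun x => by rw [← ENNReal.coe_add, ← hm x]) (F.sup List.length)
      (F.filter MinBad) hac hlen
    calc ∑ x ∈ F.filter MinBad, (m x : ℝ≥0∞) / 2
        = (∑ x ∈ F.filter MinBad, (m x : ℝ≥0∞)) / 2 := by
          simp only [div_eq_mul_inv, Finset.sum_mul]
      _ ≤ (m [] : ℝ≥0∞) / 2 := by exact ENNReal.div_le_div_right this 2
  calc lam {σ : ℕ → Bool | ∃ t x v, P.S t x = some v ∧ σ ∈ v ∧ 2 * lam v < (m x : ℝ≥0∞)}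
      ≤ lam (⋃ x, W x) := measure_mono hcover
    _ ≤ ∑' x, lam (W x) := measure_iUnion_le _
    _ ≤ ∑' x : List Bool, (if MinBad x then (m x : ℝ≥0∞) / 2 else 0) :=
        ENNReal.tsum_le_tsum hWle
    _ ≤ (m [] : ℝ≥0∞) / 2 := by
        rw [ENNReal.tsum_eq_iSup_sum]
        exact iSup_le hantichain

/-- For a pair of betting strategies `(S_A, μ_A)`, `(S_B, μ_B)` with
`μ_A(Λ) + μ_B(Λ) = 1`, the set of sequences on which both strategies achieve
capital at most `2` (i.e. `μ(x) ≤ 2·λ(S(x))` for every part containing the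
sequence) has uniform measure at least `1/2`. -/
theorem stmt11 (lam : Measure (ℕ → Bool)) (hlam : IsUniformMeasure lam)
    (PA PB : CantorPR) (mA mB : List Bool → ℝ≥0)
    (hmA : IsMassFunction mA) (hmB : IsMassFunction mB)
    (hsum : mA [] + mB [] = 1) :
    (1 / 2 : ℝ≥0∞) ≤
      lam {σ : ℕ → Bool |
        (∀ t x v, PA.S t x = some v → σ ∈ v → (mA x : ℝ≥0∞) ≤ 2 * lam v) ∧
        (∀ t x v, PB.S t x = some v → σ ∈ v → (mB x : ℝ≥0∞) ≤ 2 * lam v)} := by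
  classical
  have huniv : lam Set.univ = 1 := by
    have h0 : ({p : ℕ | ((fun _ => none : ℕ → Option Bool) p).isSome} : Set ℕ) = ∅ := by
      ext p; simp
    have h1 := hlam (fun _ => none) (by rw [h0]; exact Set.finite_empty)
    have hcs : consistentSet (fun _ => none) = Set.univ := by
      ext σ; simp [consistentSet]
    rw [hcs, h0] at h1
    simpa using h1
  set D := {σ : ℕ → Bool |
      (∀ t x v, PA.S t x = some v → σ ∈ v → (mA x : ℝ≥0∞) ≤ 2 * lam v) ∧
      (∀ t x v, PB.S t x = some v → σ ∈ v → (mB x : ℝ≥0∞) ≤ 2 * lam v)} with hD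
  set BA := {σ : ℕ → Bool | ∃ t x v, PA.S t x = some v ∧ σ ∈ v ∧ 2 * lam v < (mA x : ℝ≥0∞)}
    with hBA
  set BB := {σ : ℕ → Bool | ∃ t x v, PB.S t x = some v ∧ σ ∈ v ∧ 2 * lam v < (mB x : ℝ≥0∞)}
    with hBB
  have hsub : Dᶜ ⊆ BA ∪ BB := by
    intro σ hσ
    rw [hD] at hσ
    simp only [Set.mem_compl_iff, Set.mem_setOf_eq, not_and_or] at hσ
    rcases hσ with h | h
    · left
      push_neg at h
      obtain ⟨t, x, v, h1, h2, h3⟩ := h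
      exact ⟨t, x, v, h1, h2, h3⟩
    · right
      push_neg at h
      obtain ⟨t, x, v, h1, h2, h3⟩ := h
      exact ⟨t, x, v, h1, h2, h3⟩
  have hBAle := strategy_bound lam PA mA hmA
  have hBBle := strategy_bound lam PB mB hmB
  have hDc : lam Dᶜ ≤ (1 : ℝ≥0∞) / 2 := by
    calc lam Dᶜ ≤ lam (BA ∪ BB) := measure_mono hsub
      _ ≤ lam BA + lam BB := measure_union_le _ _
      _ ≤ (mA [] : ℝ≥0∞) / 2 + (mB [] : ℝ≥0∞) / 2 := add_le_add hBAle hBBle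
      _ = (1 : ℝ≥0∞) / 2 := by
          rw [ENNReal.div_add_div_same, ← ENNReal.coe_add, hsum, ENNReal.coe_one]
  have key : (1 : ℝ≥0∞) ≤ lam D + 1 / 2 := by
    calc (1 : ℝ≥0∞) = lam Set.univ := huniv.symm
      _ = lam (D ∪ Dᶜ) := by rw [Set.union_compl_self]
      _ ≤ lam D + lam Dᶜ := measure_union_le _ _
      _ ≤ lam D + 1 / 2 := add_le_add le_rfl hDc
  calc (1 / 2 : ℝ≥0∞) = 1 - 1 / 2 := by rw [one_div, ENNReal.one_sub_inv_two]
    _ ≤ lam D := tsub_le_iff_right.mpr key
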